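/- Assume a is positive semidefinite on V, the CFL condition holds with constant ρ ∈ [0,1) (τ² a(w,w) ≤ 4ρ² ‖π w‖² for all w ∈ V), and the Poincaré-type inequality ‖w − π w‖² ≤ 2 Λ⁻¹ H² a(w,w) holds for all w ∈ V, where Λ, H > 0. Suppose the sequence (v^n)_{n≥0} solves the discrete wave scheme with source (r^n)_{n≥1}. Then there exists a constant C > 0, depending only on ρ, such that for all n ≥ 1: E^{n+1/2}(v) ≤ C ( E^{1/2}(v) + (τ R₁^n + Λ^{−1/2} H R₂^n)² ), where R₁^n = Σ_{k=1}^{n} ‖π r^k‖ and R₂^n = ‖(I − π) r^1‖ + τ Σ_{k=1}^{n−1} ‖(I − π)((r^{k+1} − r^k)/τ)‖ + ‖(I − π) r^n‖. -/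

import Mathlib

/-!
Testing the scheme with `(v^{k+1} - v^{k-1}) / 2` gives the energy identity
`E^{n+1/2} = E^{1/2} + Σ_{1 ≤ k ≤ n} ⟪r^k, (v^{k+1} - v^{k-1}) / 2⟫`.
By the CFL condition the energy controls `‖π (v^{k+1} - v^k) / τ‖` and `a` at the averages
`(v^{k+1} + v^k) / 2`, hence, by the Poincaré-type inequality, also
`‖(I - π) (v^{k+1} + v^k) / 2‖`. So each source sum is bounded by `√(max_{k ≤ n} E^{k+1/2})`
times the data `τ R₁` resp. `Λ^{-1/2} H R₂` (the `(I - π)` part after summation by parts),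
and Young's inequality closes the estimate.
-/

open RealInnerProductSpace

/-- The discrete energy `E^{n+1/2}(v)` of the leapfrog scheme. -/
noncomputable def discE {H : Type*} [NormedAddCommGroup H] [InnerProductSpace ℝ H]
    (W : Submodule ℝ H) [W.HasOrthogonalProjection]
    (a : H →ₗ[ℝ] H →ₗ[ℝ] ℝ) (τ : ℝ) (v : ℕ → H) (n : ℕ) : ℝ :=
  (1 / 2) * ‖(Submodule.orthogonalProjectionOnto W (τ⁻¹ • (v (n + 1) - v n)) : H)‖ ^ 2
    - (τ ^ 2 / 8) * a (τ⁻¹ • (v (n + 1) - v n)) (τ⁻¹ • (v (n + 1) - v n))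
    + (1 / 2) * a ((2 : ℝ)⁻¹ • (v (n + 1) + v n)) ((2 : ℝ)⁻¹ • (v (n + 1) + v n))

open Finset

lemma le_sqrt_mul_of_sq_le_mul_sq {x c t : ℝ} (ht : 0 ≤ t) (h : x ^ 2 ≤ c * t ^ 2) :
    x ≤ √c * t :=
  calc x ≤ |x| := le_abs_self x
    _ ≤ √(c * t ^ 2) := Real.abs_le_sqrt h
    _ = √c * t := by rw [Real.sqrt_mul' c (sq_nonneg t), Real.sqrt_sq ht]

/-- Apply the hypothesis with `s ^ 2 = max_{j ≤ n} E j`, then Young's inequality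
`b s ≤ (b ^ 2 + s ^ 2) / 2`. -/
lemma le_two_mul_add_sq_of_forall_sq_le {E : ℕ → ℝ} {n : ℕ} {e b : ℝ} (h0 : 0 ≤ E 0)
    (h : ∀ s, 0 ≤ s → (∀ j ≤ n, E j ≤ s ^ 2) → ∀ K ≤ n, E K ≤ e + b * s) :
    E n ≤ 2 * e + b ^ 2 := by
  have hne : (range (n + 1)).Nonempty := nonempty_range_add_one
  set M := (range (n + 1)).sup' hne E
  have hle : ∀ j ≤ n, E j ≤ M := fun j hj => le_sup' E (mem_range.2 (Nat.lt_succ_of_le hj))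
  have hM : 0 ≤ M := h0.trans (hle 0 n.zero_le)
  have hle' : ∀ j ≤ n, E j ≤ √M ^ 2 := by rwa [Real.sq_sqrt hM]
  obtain ⟨K, hK, hMK⟩ : ∃ K ∈ range (n + 1), M = E K := exists_mem_eq_sup' hne E
  have hMb : M ≤ e + b * √M :=
    hMK.trans_le <| h (√M) (Real.sqrt_nonneg M) hle' K (Nat.lt_succ_iff.1 (mem_range.1 hK))
  nlinarith [hle n le_rfl, sq_nonneg (b - √M), Real.sq_sqrt hM]

section InnerProductSpace

variable {H : Type*} [NormedAddCommGroup H] [InnerProductSpace ℝ H]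

lemma sum_inner_le_mul_sum_norm {ι : Type*} (s : Finset ι) (x y : ι → H) {B : ℝ}
    (hy : ∀ k ∈ s, ‖y k‖ ≤ B) : ∑ k ∈ s, ⟪x k, y k⟫ ≤ B * ∑ k ∈ s, ‖x k‖ := by
  rw [mul_sum]
  refine sum_le_sum fun k hk => ?_
  calc ⟪x k, y k⟫ ≤ ‖x k‖ * ‖y k‖ := real_inner_le_norm _ _
    _ ≤ ‖x k‖ * B := mul_le_mul_of_nonneg_left (hy k hk) (norm_nonneg _)
    _ = B * ‖x k‖ := mul_comm _ _

lemma sum_Icc_inner_sub_eq (g q : ℕ → H) (N : ℕ) :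
    ∑ k ∈ Icc 1 (N + 1), ⟪g k, q k - q (k - 1)⟫ =
      ⟪g (N + 1), q (N + 1)⟫ - ⟪g 1, q 0⟫ + ∑ k ∈ Icc 1 N, ⟪g k - g (k + 1), q k⟫ := by
  induction N with
  | zero => simp [inner_sub_right]
  | succ N ih =>
    rw [sum_Icc_succ_top (by omega), ih, sum_Icc_succ_top (by omega)]
    simp only [Nat.add_sub_cancel, inner_sub_left, inner_sub_right]
    ring

lemma norm_le_norm_add_sum_norm_sub {E : Type*} [SeminormedAddCommGroup E] (g : ℕ → E) (N : ℕ) :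
    ‖g (N + 1)‖ ≤ ‖g 1‖ + ∑ k ∈ Icc 1 N, ‖g (k + 1) - g k‖ := by
  induction N with
  | zero => simp
  | succ N ih =>
    rw [sum_Icc_succ_top (by omega)]
    linarith [norm_le_insert' (g (N + 1 + 1)) (g (N + 1)), norm_sub_rev (g (N + 1 + 1)) (g (N + 1))]

lemma sum_Icc_inner_sub_le (g q : ℕ → H) {K : ℕ} {Q : ℝ} (hq : ∀ j ≤ K, ‖q j‖ ≤ Q) :
    ∑ k ∈ Icc 1 K, ⟪g k, q k - q (k - 1)⟫
      ≤ 2 * Q * (‖g 1‖ + ∑ k ∈ Icc 1 (K - 1), ‖g (k + 1) - g k‖) := by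
  have hQ : 0 ≤ Q := (norm_nonneg _).trans (hq 0 K.zero_le)
  set T := ∑ k ∈ Icc 1 (K - 1), ‖g (k + 1) - g k‖
  have hT : 0 ≤ T := sum_nonneg fun _ _ => norm_nonneg _
  rcases K with _ | N
  · simp only [Icc_eq_empty_of_lt zero_lt_one, sum_empty]
    positivity
  rw [sum_Icc_inner_sub_eq]
  have hlast : ⟪g (N + 1), q (N + 1)⟫ ≤ (‖g 1‖ + T) * Q :=
    (real_inner_le_norm _ _).trans <| mul_le_mul (norm_le_norm_add_sum_norm_sub g N)
      (hq _ le_rfl) (norm_nonneg _) (by positivity)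
  have hfirst : -⟪g 1, q 0⟫ ≤ ‖g 1‖ * Q :=
    (neg_le_abs _).trans <| (abs_real_inner_le_norm _ _).trans <|
      mul_le_mul_of_nonneg_left (hq 0 (Nat.zero_le _)) (norm_nonneg _)
  have hmid : ∑ k ∈ Icc 1 N, ⟪g k - g (k + 1), q k⟫ ≤ Q * T := by
    refine (sum_inner_le_mul_sum_norm _ _ _ fun k hk => hq k ?_).trans_eq ?_
    · exact (mem_Icc.1 hk).2.trans N.le_succ
    · simp only [T, Nat.add_sub_cancel, norm_sub_rev]
  nlinarith

lemma inner_eq_inner_starProjection_add_inner_sub (W : Submodule ℝ H) [W.HasOrthogonalProjection]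
    (x y : H) :
    ⟪x, y⟫ = ⟪W.starProjection x, W.starProjection y⟫
      + ⟪x - W.starProjection x, y - W.starProjection y⟫ := by
  have hx := W.starProjection_inner_eq_zero x _ (W.starProjection_apply_mem y)
  have hy := W.starProjection_inner_eq_zero y _ (W.starProjection_apply_mem x)
  rw [real_inner_comm] at hy
  simp only [inner_sub_left, inner_sub_right] at hx hy ⊢
  linarith

end InnerProductSpace

section Leapfrog

variable {H : Type*} [NormedAddCommGroup H] [InnerProductSpace ℝ H]
  {W : Submodule ℝ H} [W.HasOrthogonalProjection] {a : H →ₗ[ℝ] H →ₗ[ℝ] ℝ} {τ : ℝ}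

noncomputable def diffQuot (τ : ℝ) (v : ℕ → H) (j : ℕ) : H := τ⁻¹ • (v (j + 1) - v j)

noncomputable def midpt (v : ℕ → H) (j : ℕ) : H := (2 : ℝ)⁻¹ • (v (j + 1) + v j)

lemma discE_eq (v : ℕ → H) (j : ℕ) :
    discE W a τ v j = 1 / 2 * ‖W.starProjection (diffQuot τ v j)‖ ^ 2
      - τ ^ 2 / 8 * a (diffQuot τ v j) (diffQuot τ v j) + 1 / 2 * a (midpt v j) (midpt v j) :=
  rfl

lemma discE_eq_of_symm (hsym : ∀ u w, a u w = a w u) (hτ : τ ≠ 0) (v : ℕ → H) (j : ℕ) :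
    discE W a τ v j = 1 / 2 * ‖W.starProjection (diffQuot τ v j)‖ ^ 2
      + 1 / 2 * a (v (j + 1)) (v j) := by
  rw [discE_eq]
  have := hsym (v (j + 1)) (v j)
  simp only [diffQuot, midpt, map_smul, map_add, map_sub, LinearMap.smul_apply,
    LinearMap.add_apply, LinearMap.sub_apply, smul_eq_mul]
  field_simp
  linarith

lemma midpt_succ_sub_midpt (v : ℕ → H) (j : ℕ) :
    midpt v (j + 1) - midpt v j = (2 : ℝ)⁻¹ • (v (j + 2) - v j) := by
  simp only [midpt, ← smul_sub]
  congr 1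
  abel

lemma midpt_succ_sub_midpt_eq_smul_diffQuot (hτ : τ ≠ 0) (v : ℕ → H) (j : ℕ) :
    midpt v (j + 1) - midpt v j = (τ / 2) • (diffQuot τ v (j + 1) + diffQuot τ v j) := by
  rw [midpt_succ_sub_midpt, diffQuot, diffQuot, ← smul_add, smul_smul,
    show τ / 2 * τ⁻¹ = 2⁻¹ by field_simp]
  congr 1
  abel

lemma discE_succ (hsym : ∀ u w, a u w = a w u) (hτ : τ ≠ 0) (v : ℕ → H) (f : H) (j : ℕ)
    (hs : ⟪W.starProjection ((τ ^ 2)⁻¹ • (v (j + 2) - 2 • v (j + 1) + v j)),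
        W.starProjection (midpt v (j + 1) - midpt v j)⟫
      + a (v (j + 1)) (midpt v (j + 1) - midpt v j) = ⟪f, midpt v (j + 1) - midpt v j⟫) :
    discE W a τ v (j + 1) = discE W a τ v j + ⟪f, midpt v (j + 1) - midpt v j⟫ := by
  set P := W.starProjection
  have hdiff : diffQuot τ v (j + 1) - diffQuot τ v j
      = τ • ((τ ^ 2)⁻¹ • (v (j + 2) - 2 • v (j + 1) + v j)) := by
    rw [diffQuot, diffQuot, ← smul_sub, smul_smul, show τ * (τ ^ 2)⁻¹ = τ⁻¹ by field_simp]
    congr 1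
    abel
  have hadd : diffQuot τ v (j + 1) + diffQuot τ v j = (2 / τ) • (midpt v (j + 1) - midpt v j) := by
    rw [midpt_succ_sub_midpt_eq_smul_diffQuot hτ, smul_smul,
      show 2 / τ * (τ / 2) = 1 by field_simp, one_smul]
  have hkin : 1 / 2 * ‖P (diffQuot τ v (j + 1))‖ ^ 2 - 1 / 2 * ‖P (diffQuot τ v j)‖ ^ 2
      = ⟪P ((τ ^ 2)⁻¹ • (v (j + 2) - 2 • v (j + 1) + v j)), P (midpt v (j + 1) - midpt v j)⟫ :=
    calc _ = 1 / 2 * ⟪P (diffQuot τ v (j + 1) - diffQuot τ v j),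
          P (diffQuot τ v (j + 1) + diffQuot τ v j)⟫ := by
          rw [map_sub, map_add, inner_sub_left, inner_add_right, inner_add_right,
            real_inner_comm (P (diffQuot τ v j)), real_inner_self_eq_norm_sq,
            real_inner_self_eq_norm_sq]
          ring
      _ = _ := by
          rw [hdiff, hadd, map_smul P τ, map_smul P (2 / τ), real_inner_smul_left,
            real_inner_smul_right]
          field_simp
  have hpot : 1 / 2 * a (v (j + 2)) (v (j + 1)) - 1 / 2 * a (v (j + 1)) (v j)
      = a (v (j + 1)) (midpt v (j + 1) - midpt v j) := by
    rw [midpt_succ_sub_midpt, hsym (v (j + 2))]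
    simp only [map_smul, map_sub, smul_eq_mul]
    ring
  rw [discE_eq_of_symm hsym hτ, discE_eq_of_symm hsym hτ]
  linarith

lemma discE_eq_add_sum (hsym : ∀ u w, a u w = a w u) (hτ : τ ≠ 0) {V : Submodule ℝ H}
    {v r : ℕ → H} (hv : ∀ n, v n ∈ V)
    (hscheme : ∀ n, 1 ≤ n → ∀ w ∈ V,
      ⟪W.starProjection ((τ ^ 2)⁻¹ • (v (n + 1) - 2 • v n + v (n - 1))), W.starProjection w⟫
        + a (v n) w = ⟪r n, w⟫) (N : ℕ) :
    discE W a τ v N = discE W a τ v 0 + ∑ k ∈ Icc 1 N, ⟪r k, midpt v k - midpt v (k - 1)⟫ := by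
  induction N with
  | zero => simp
  | succ N ih =>
    have hw : midpt v (N + 1) - midpt v N ∈ V := by
      rw [midpt_succ_sub_midpt]
      exact V.smul_mem _ (V.sub_mem (hv _) (hv _))
    rw [sum_Icc_succ_top (by omega), Nat.add_sub_cancel, ← add_assoc, ← ih]
    exact discE_succ hsym hτ v (r (N + 1)) N (hscheme (N + 1) N.succ_pos _ hw)

lemma discE_lower_bound {ρ : ℝ} (v : ℕ → H) (j : ℕ)
    (hCFL : τ ^ 2 * a (diffQuot τ v j) (diffQuot τ v j)
      ≤ 4 * ρ ^ 2 * ‖W.starProjection (diffQuot τ v j)‖ ^ 2) :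
    (1 - ρ ^ 2) / 2 * ‖W.starProjection (diffQuot τ v j)‖ ^ 2 + 1 / 2 * a (midpt v j) (midpt v j)
      ≤ discE W a τ v j := by
  rw [discE_eq]
  linarith

lemma a_midpt_le_two_mul_discE {ρ : ℝ} (hρ : ρ ^ 2 ≤ 1) (v : ℕ → H) (j : ℕ)
    (hCFL : τ ^ 2 * a (diffQuot τ v j) (diffQuot τ v j)
      ≤ 4 * ρ ^ 2 * ‖W.starProjection (diffQuot τ v j)‖ ^ 2) :
    a (midpt v j) (midpt v j) ≤ 2 * discE W a τ v j := by
  have : 0 ≤ (1 - ρ ^ 2) / 2 * ‖W.starProjection (diffQuot τ v j)‖ ^ 2 := by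
    have : 0 ≤ 1 - ρ ^ 2 := by linarith
    positivity
  linarith [discE_lower_bound v j hCFL]

lemma discE_nonneg {ρ : ℝ} (hρ : ρ ^ 2 ≤ 1) (v : ℕ → H) (j : ℕ)
    (hCFL : τ ^ 2 * a (diffQuot τ v j) (diffQuot τ v j)
      ≤ 4 * ρ ^ 2 * ‖W.starProjection (diffQuot τ v j)‖ ^ 2)
    (ha : 0 ≤ a (midpt v j) (midpt v j)) : 0 ≤ discE W a τ v j := by
  linarith [a_midpt_le_two_mul_discE hρ v j hCFL]

lemma norm_starProjection_diffQuot_le {ρ s : ℝ} (hρ : ρ ^ 2 < 1) (hs : 0 ≤ s) (v : ℕ → H) (j : ℕ)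
    (hCFL : τ ^ 2 * a (diffQuot τ v j) (diffQuot τ v j)
      ≤ 4 * ρ ^ 2 * ‖W.starProjection (diffQuot τ v j)‖ ^ 2)
    (ha : 0 ≤ a (midpt v j) (midpt v j)) (hE : discE W a τ v j ≤ s ^ 2) :
    ‖W.starProjection (diffQuot τ v j)‖ ≤ √(2 / (1 - ρ ^ 2)) * s := by
  refine le_sqrt_mul_of_sq_le_mul_sq hs ?_
  rw [div_mul_eq_mul_div, le_div_iff₀ (by linarith)]
  linarith [discE_lower_bound v j hCFL]

lemma norm_sub_starProjection_midpt_le {ρ Λ Hc s : ℝ} (hρ : ρ ^ 2 ≤ 1) (hΛ : 0 ≤ Λ)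
    (hHc : 0 ≤ Hc) (hs : 0 ≤ s) (v : ℕ → H) (j : ℕ)
    (hCFL : τ ^ 2 * a (diffQuot τ v j) (diffQuot τ v j)
      ≤ 4 * ρ ^ 2 * ‖W.starProjection (diffQuot τ v j)‖ ^ 2)
    (hPoin : ‖midpt v j - W.starProjection (midpt v j)‖ ^ 2
      ≤ 2 * Λ⁻¹ * Hc ^ 2 * a (midpt v j) (midpt v j))
    (hE : discE W a τ v j ≤ s ^ 2) :
    ‖midpt v j - W.starProjection (midpt v j)‖ ≤ 2 * ((√Λ)⁻¹ * Hc) * s := by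
  have ha : a (midpt v j) (midpt v j) ≤ 2 * s ^ 2 := by
    linarith [a_midpt_le_two_mul_discE hρ v j hCFL]
  have hsq : ‖midpt v j - W.starProjection (midpt v j)‖ ^ 2 ≤ Λ⁻¹ * (2 * Hc * s) ^ 2 :=
    calc _ ≤ 2 * Λ⁻¹ * Hc ^ 2 * a (midpt v j) (midpt v j) := hPoin
      _ ≤ 2 * Λ⁻¹ * Hc ^ 2 * (2 * s ^ 2) := by gcongr
      _ = Λ⁻¹ * (2 * Hc * s) ^ 2 := by ring
  calc _ ≤ √Λ⁻¹ * (2 * Hc * s) := le_sqrt_mul_of_sq_le_mul_sq (by positivity) hsq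
    _ = 2 * ((√Λ)⁻¹ * Hc) * s := by rw [Real.sqrt_inv]; ring

lemma norm_starProjection_midpt_sub_le (hτ : 0 < τ) (v : ℕ → H) (i : ℕ) {D : ℝ}
    (h₁ : ‖W.starProjection (diffQuot τ v (i + 1))‖ ≤ D)
    (h₀ : ‖W.starProjection (diffQuot τ v i)‖ ≤ D) :
    ‖W.starProjection (midpt v (i + 1) - midpt v i)‖ ≤ τ * D := by
  rw [midpt_succ_sub_midpt_eq_smul_diffQuot hτ.ne', map_smul, map_add, norm_smul,
    Real.norm_of_nonneg (by positivity)]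
  calc _ ≤ τ / 2 * (D + D) := by gcongr; exact (norm_add_le _ _).trans (add_le_add h₁ h₀)
    _ = τ * D := by ring

/-- The `π`-part of each source term is bounded through the kinetic energy, the `(I - π)`-part
through the Poincaré-type bound on the averages, after summation by parts. -/
lemma sum_inner_midpt_sub_le (hτ : 0 < τ) (v r : ℕ → H) {n K : ℕ} (hK : K ≤ n) {D Q : ℝ}
    (hD : ∀ j ≤ n, ‖W.starProjection (diffQuot τ v j)‖ ≤ D)
    (hQ : ∀ j ≤ n, ‖midpt v j - W.starProjection (midpt v j)‖ ≤ Q) :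
    ∑ k ∈ Icc 1 K, ⟪r k, midpt v k - midpt v (k - 1)⟫
      ≤ τ * D * ∑ k ∈ Icc 1 n, ‖W.starProjection (r k)‖
        + 2 * Q * (‖r 1 - W.starProjection (r 1)‖ + ∑ k ∈ Icc 1 (n - 1),
            ‖(r (k + 1) - W.starProjection (r (k + 1))) - (r k - W.starProjection (r k))‖) := by
  set P := W.starProjection
  set g : ℕ → H := fun k => r k - P (r k)
  set q : ℕ → H := fun j => midpt v j - P (midpt v j)
  have hsplit : ∀ k, ⟪r k, midpt v k - midpt v (k - 1)⟫
      = ⟪P (r k), P (midpt v k - midpt v (k - 1))⟫ + ⟪g k, q k - q (k - 1)⟫ := fun k => by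
    rw [inner_eq_inner_starProjection_add_inner_sub W, map_sub]
    congr 2
    simp only [q]
    abel
  have hD0 : 0 ≤ D := (norm_nonneg _).trans (hD 0 n.zero_le)
  have hQ0 : 0 ≤ Q := (norm_nonneg _).trans (hQ 0 n.zero_le)
  have hπ : ∑ k ∈ Icc 1 K, ⟪P (r k), P (midpt v k - midpt v (k - 1))⟫
      ≤ τ * D * ∑ k ∈ Icc 1 n, ‖P (r k)‖ := by
    refine (sum_inner_le_mul_sum_norm (B := τ * D) _ _ _ fun k hk => ?_).trans ?_
    · obtain ⟨i, rfl⟩ : ∃ i, k = i + 1 := ⟨k - 1, by grind⟩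
      have hi : i + 1 ≤ n := (mem_Icc.1 hk).2.trans hK
      exact norm_starProjection_midpt_sub_le hτ v i (hD _ hi) (hD _ (by omega))
    · exact mul_le_mul_of_nonneg_left (sum_le_sum_of_subset_of_nonneg (Icc_subset_Icc_right hK)
        fun _ _ _ => norm_nonneg _) (by positivity)
  have horth : ∑ k ∈ Icc 1 K, ⟪g k, q k - q (k - 1)⟫
      ≤ 2 * Q * (‖g 1‖ + ∑ k ∈ Icc 1 (n - 1), ‖g (k + 1) - g k‖) := by
    refine (sum_Icc_inner_sub_le g q fun j hj => hQ j (hj.trans hK)).trans ?_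
    gcongr
  rw [sum_congr rfl fun k _ => hsplit k, sum_add_distrib]
  exact add_le_add hπ horth

end Leapfrog

/-- Energy estimate for the discrete wave scheme: there is a constant `C > 0`
depending only on `ρ` such that
`E^{n+1/2}(v) ≤ C (E^{1/2}(v) + (τ R₁^n + Λ^{−1/2} H R₂^n)²)`, where
`R₁^n = Σ_{k=1}^n ‖π r^k‖` and
`R₂^n = ‖(I−π) r^1‖ + τ Σ_{k=1}^{n−1} ‖(I−π)((r^{k+1}−r^k)/τ)‖ + ‖(I−π) r^n‖`. -/
theorem energy_estimate (ρ : ℝ) (hρ0 : 0 ≤ ρ) (hρ1 : ρ < 1) :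
    ∃ C : ℝ, 0 < C ∧
      ∀ (H : Type) [NormedAddCommGroup H] [InnerProductSpace ℝ H]
        (W V : Submodule ℝ H) [W.HasOrthogonalProjection]
        (a : H →ₗ[ℝ] H →ₗ[ℝ] ℝ), (∀ u w : H, a u w = a w u) →
      ∀ τ : ℝ, 0 < τ →
      ∀ Λ Hc : ℝ, 0 < Λ → 0 < Hc →
      (∀ w ∈ V, 0 ≤ a w w) →
      (∀ w ∈ V, τ ^ 2 * a w w ≤ 4 * ρ ^ 2 * ‖(Submodule.orthogonalProjectionOnto W w : H)‖ ^ 2) →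
      (∀ w ∈ V, ‖w - (Submodule.orthogonalProjectionOnto W w : H)‖ ^ 2 ≤ 2 * Λ⁻¹ * Hc ^ 2 * a w w) →
      ∀ v r : ℕ → H, (∀ n, v n ∈ V) →
      (∀ n, 1 ≤ n → ∀ w ∈ V,
        ⟪(Submodule.orthogonalProjectionOnto W ((τ ^ 2)⁻¹ • (v (n + 1) - 2 • v n + v (n - 1))) : H),
          (Submodule.orthogonalProjectionOnto W w : H)⟫ + a (v n) w = ⟪r n, w⟫) →
      ∀ n, 1 ≤ n →
        discE W a τ v n
          ≤ C * (discE W a τ v 0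
            + (τ * (∑ k ∈ Finset.Icc 1 n, ‖(Submodule.orthogonalProjectionOnto W (r k) : H)‖)
              + (Real.sqrt Λ)⁻¹ * Hc *
                (‖r 1 - (Submodule.orthogonalProjectionOnto W (r 1) : H)‖
                  + τ * ∑ k ∈ Finset.Icc 1 (n - 1),
                      ‖τ⁻¹ • (r (k + 1) - r k)
                        - (Submodule.orthogonalProjectionOnto W (τ⁻¹ • (r (k + 1) - r k)) : H)‖
                  + ‖r n - (Submodule.orthogonalProjectionOnto W (r n) : H)‖)) ^ 2) := by
  have hρ : ρ ^ 2 < 1 := by nlinarith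
  set κ := √(2 / (1 - ρ ^ 2))
  refine ⟨2 + (κ + 4) ^ 2, by positivity, ?_⟩
  intro H _ _ W V _ a hsym τ hτ Λ Hc hΛ hHc ha0 hCFL hPoin v r hv hscheme n _
  simp only [Submodule.coe_orthogonalProjectionOnto_apply] at hCFL hPoin hscheme ⊢
  set P := W.starProjection
  have hdq : ∀ j, diffQuot τ v j ∈ V := fun j => V.smul_mem _ (V.sub_mem (hv _) (hv _))
  have hmid : ∀ j, midpt v j ∈ V := fun j => V.smul_mem _ (V.add_mem (hv _) (hv _))
  set R₁ := ∑ k ∈ Icc 1 n, ‖P (r k)‖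
  set R₂ := ‖r 1 - P (r 1)‖ + ∑ k ∈ Icc 1 (n - 1), ‖(r (k + 1) - P (r (k + 1))) - (r k - P (r k))‖
  set θ := (√Λ)⁻¹ * Hc
  have hE0 : 0 ≤ discE W a τ v 0 := discE_nonneg hρ.le v 0 (hCFL _ (hdq 0)) (ha0 _ (hmid 0))
  have hR₁ : 0 ≤ R₁ := sum_nonneg fun _ _ => norm_nonneg _
  have hR₂ : 0 ≤ R₂ := by positivity
  have hbound : discE W a τ v n ≤ 2 * discE W a τ v 0 + ((κ + 4) * (τ * R₁ + θ * R₂)) ^ 2 := by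
    refine le_two_mul_add_sq_of_forall_sq_le hE0 fun s hs hE K hK => ?_
    rw [discE_eq_add_sum hsym hτ.ne' hv hscheme]
    have := sum_inner_midpt_sub_le hτ v r hK
      (fun j hj => norm_starProjection_diffQuot_le hρ hs v j (hCFL _ (hdq j)) (ha0 _ (hmid j))
        (hE j hj))
      (fun j hj => norm_sub_starProjection_midpt_le hρ.le hΛ.le hHc.le hs v j (hCFL _ (hdq j))
        (hPoin _ (hmid j)) (hE j hj))
    have hκθ : 0 ≤ κ * θ := by positivity
    nlinarith [mul_nonneg (mul_nonneg hτ.le hR₁) hs, mul_nonneg (mul_nonneg hκθ hR₂) hs]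
  have hterm : ∀ k, τ * ‖τ⁻¹ • (r (k + 1) - r k) - P (τ⁻¹ • (r (k + 1) - r k))‖
      = ‖(r (k + 1) - P (r (k + 1))) - (r k - P (r k))‖ := fun k => by
    rw [map_smul, ← smul_sub, norm_smul, Real.norm_of_nonneg (inv_nonneg.2 hτ.le), ← mul_assoc,
      mul_inv_cancel₀ hτ.ne', one_mul, map_sub]
    congr 1
    abel
  rw [mul_sum (Icc 1 (n - 1)), sum_congr rfl fun k _ => hterm k]
  change _ ≤ _ * (_ + (τ * R₁ + θ * (R₂ + ‖r n - P (r n)‖)) ^ 2)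
  calc discE W a τ v n ≤ 2 * discE W a τ v 0 + ((κ + 4) * (τ * R₁ + θ * R₂)) ^ 2 := hbound
    _ ≤ 2 * discE W a τ v 0 + ((κ + 4) * (τ * R₁ + θ * (R₂ + ‖r n - P (r n)‖))) ^ 2 := by
      gcongr
      exact le_add_of_nonneg_right (norm_nonneg _)
    _ ≤ _ := by nlinarith [mul_nonneg (sq_nonneg (κ + 4)) hE0]
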